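/- Let S ∈ M_4(ℂ) be the swap operator on ℂ² ⊗ ℂ² (S(x ⊗ y) = y ⊗ x), let B = {Φ₊, Φ₋, Ψ₊, Ψ₋} be the Bell basis with |Φ±⟩ = (|00⟩ ± |11⟩)/√2 and |Ψ±⟩ = (|01⟩ ± |10⟩)/√2, let D_B : M_4(ℂ) → M_4(ℂ) be the completely dephasing map in the Bell basis, D_B(ρ) = Σ_{b∈B} |b⟩⟨b| ρ |b⟩⟨b|, let λ ≥ 0, and let L(ρ) = i(Sρ − ρS) + λ(D_B(ρ) − ρ). Then for every t ≥ 0 and every ρ ∈ M_4(ℂ): e^{tL}(ρ) = e^{−λt} e^{itS} ρ e^{−itS} + (1 − e^{−λt}) D_B(ρ). -/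

import Mathlib

open scoped Kronecker ComplexOrder Matrix

noncomputable section

/-- The Choi matrix of a linear map between matrix algebras. -/
def choi {ι κ : Type*} [Fintype ι] [DecidableEq ι] [Fintype κ]
    (E : Matrix ι ι ℂ →ₗ[ℂ] Matrix κ κ ℂ) : Matrix (ι × κ) (ι × κ) ℂ :=
  ∑ i : ι, ∑ j : ι, Matrix.single i j (1 : ℂ) ⊗ₖ E (Matrix.single i j 1)

/-- A quantum channel: completely positive (positive semidefinite Choi matrix) and
trace preserving. -/
def IsCPTP {ι κ : Type*} [Fintype ι] [DecidableEq ι] [Fintype κ]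
    (E : Matrix ι ι ℂ →ₗ[ℂ] Matrix κ κ ℂ) : Prop :=
  (choi E).PosSemidef ∧ ∀ X, (E X).trace = X.trace

/-- A density matrix: positive semidefinite with unit trace. -/
def IsDensityMatrix {ι : Type*} [Fintype ι] (ρ : Matrix ι ι ℂ) : Prop :=
  ρ.PosSemidef ∧ ρ.trace = 1

/-- The exponential `e^L` of a superoperator `L`, taken in the algebra of linear
endomorphisms of the matrix space (computed via the matrix exponential in the
standard basis of the matrix space). -/
def expL {ι : Type*} [Fintype ι] [DecidableEq ι]
    (L : Matrix ι ι ℂ →ₗ[ℂ] Matrix ι ι ℂ) : Matrix ι ι ℂ →ₗ[ℂ] Matrix ι ι ℂ :=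
  Matrix.toLin (Matrix.stdBasis ℂ ι ι) (Matrix.stdBasis ℂ ι ι)
    (NormedSpace.exp (LinearMap.toMatrix (Matrix.stdBasis ℂ ι ι) (Matrix.stdBasis ℂ ι ι) L))

/-- A Lindbladian: `L(ρ) = -i[H,ρ] + Σ_j γ_j (A_j ρ A_j† - ½{A_j†A_j, ρ})` with `H`
Hermitian and rates `γ_j ≥ 0`. -/
def IsLindbladian {ι : Type*} [Fintype ι] [DecidableEq ι]
    (L : Matrix ι ι ℂ →ₗ[ℂ] Matrix ι ι ℂ) : Prop :=
  ∃ (J : ℕ) (H : Matrix ι ι ℂ) (γ : Fin J → ℝ) (A : Fin J → Matrix ι ι ℂ),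
    H.IsHermitian ∧ (∀ j, 0 ≤ γ j) ∧
    ∀ ρ, L ρ = -(Complex.I) • (H * ρ - ρ * H) +
      ∑ j, (γ j : ℂ) •
        (A j * ρ * (A j)ᴴ - (2⁻¹ : ℂ) • ((A j)ᴴ * A j * ρ + ρ * ((A j)ᴴ * A j)))

/-- `L` is quantum programmable: there are a finite-dimensional program register, a fixed
quantum channel `P`, and a continuous family of program (density) states `π t` such that
`P (X ⊗ π t) = e^{tL} X` for all `t ≥ 0`. -/
def QuantumProgrammable {ι : Type*} [Fintype ι] [DecidableEq ι]
    (L : Matrix ι ι ℂ →ₗ[ℂ] Matrix ι ι ℂ) : Prop :=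
  ∃ dP : ℕ, 1 ≤ dP ∧
    ∃ (P : Matrix (ι × Fin dP) (ι × Fin dP) ℂ →ₗ[ℂ] Matrix ι ι ℂ)
      (π : ℝ → Matrix (Fin dP) (Fin dP) ℂ),
      IsCPTP P ∧ ContinuousOn π (Set.Ici 0) ∧
      (∀ t : ℝ, 0 ≤ t → IsDensityMatrix (π t)) ∧
      ∀ t : ℝ, 0 ≤ t → ∀ X, P (X ⊗ₖ π t) = expL ((t : ℂ) • L) X

/-- The swap operator on `ℂ² ⊗ ℂ²`: `S(x ⊗ y) = y ⊗ x`. -/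
def swapM : Matrix (Fin 2 × Fin 2) (Fin 2 × Fin 2) ℂ :=
  Matrix.of fun p q => if p.1 = q.2 ∧ p.2 = q.1 then 1 else 0

/-- The Bell basis `{Φ₊, Φ₋, Ψ₊, Ψ₋}` of `ℂ² ⊗ ℂ²`. -/
def bell : Fin 4 → (Fin 2 × Fin 2 → ℂ)
  | 0 => fun p => if p = (0, 0) then ((Real.sqrt 2 : ℂ))⁻¹
      else if p = (1, 1) then ((Real.sqrt 2 : ℂ))⁻¹ else 0
  | 1 => fun p => if p = (0, 0) then ((Real.sqrt 2 : ℂ))⁻¹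
      else if p = (1, 1) then -((Real.sqrt 2 : ℂ))⁻¹ else 0
  | 2 => fun p => if p = (0, 1) then ((Real.sqrt 2 : ℂ))⁻¹
      else if p = (1, 0) then ((Real.sqrt 2 : ℂ))⁻¹ else 0
  | 3 => fun p => if p = (0, 1) then ((Real.sqrt 2 : ℂ))⁻¹
      else if p = (1, 0) then -((Real.sqrt 2 : ℂ))⁻¹ else 0

/-- The completely dephasing map in the Bell basis, `D_B(ρ) = Σ_b |b⟩⟨b| ρ |b⟩⟨b|`. -/
def bellDephasing (ρ : Matrix (Fin 2 × Fin 2) (Fin 2 × Fin 2) ℂ) :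
    Matrix (Fin 2 × Fin 2) (Fin 2 × Fin 2) ℂ :=
  ∑ b : Fin 4,
    Matrix.vecMulVec (bell b) (star (bell b)) * ρ * Matrix.vecMulVec (bell b) (star (bell b))

/- ---------------- auxiliary development ---------------- -/

namespace SwapDephasingAux

/-- Generic transport of an eigenvalue equation through the exponential series. -/
lemma exp_apply_eigen {m : Type*} [Fintype m] [DecidableEq m]
    {W : Type*} [AddCommGroup W] [Module ℂ W] [TopologicalSpace W]
    [IsTopologicalAddGroup W] [ContinuousSMul ℂ W] [T2Space W]
    (M : Matrix m m ℂ) (f : Matrix m m ℂ →ₗ[ℂ] W) (μ : ℂ) (w : W)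
    (h : ∀ n : ℕ, f (M ^ n) = μ ^ n • w) :
    f (NormedSpace.exp M) = Complex.exp μ • w := by
  letI : SeminormedRing (Matrix m m ℂ) := Matrix.linftyOpSemiNormedRing
  letI : NormedRing (Matrix m m ℂ) := Matrix.linftyOpNormedRing
  letI : NormedAlgebra ℂ (Matrix m m ℂ) := Matrix.linftyOpNormedAlgebra
  have hf : Continuous f := LinearMap.continuous_of_finiteDimensional f
  have hs : HasSum (fun n : ℕ => ((n.factorial : ℂ))⁻¹ • M ^ n) (NormedSpace.exp M) :=
    NormedSpace.exp_series_hasSum_exp' (𝕂 := ℂ) M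
  have h2 : HasSum (fun n : ℕ => f (((n.factorial : ℂ))⁻¹ • M ^ n))
      (f (NormedSpace.exp M)) := hs.map f hf
  have h3 : HasSum (fun n : ℕ => (((n.factorial : ℂ))⁻¹ * μ ^ n) • w)
      (f (NormedSpace.exp M)) := by
    simpa [h, mul_smul] using h2
  have hc : HasSum (fun n : ℕ => ((n.factorial : ℂ))⁻¹ • μ ^ n) (Complex.exp μ) := by
    rw [Complex.exp_eq_exp_ℂ]
    exact NormedSpace.exp_series_hasSum_exp' (𝕂 := ℂ) μ
  have h4 : HasSum (fun n : ℕ => (((n.factorial : ℂ))⁻¹ * μ ^ n) • w) (Complex.exp μ • w) := by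
    simpa [smul_smul] using hc.smul_const w
  exact h3.unique h4

/-- exp(M) * X = e^μ X for a right "eigenmatrix". -/
lemma exp_mul_eigen {m : Type*} [Fintype m] [DecidableEq m]
    (M X : Matrix m m ℂ) (μ : ℂ) (h : M * X = μ • X) :
    NormedSpace.exp M * X = Complex.exp μ • X := by
  have hpow : ∀ n : ℕ, (LinearMap.mulRight ℂ X) (M ^ n) = μ ^ n • X := by
    intro n
    induction n with
    | zero => simp
    | succ n ih =>
      simp only [LinearMap.mulRight_apply] at ih ⊢
      rw [pow_succ', mul_assoc, ih, mul_smul_comm, h, smul_smul, ← pow_succ]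
  exact exp_apply_eigen M (LinearMap.mulRight ℂ X) μ X hpow

/-- X * exp(M) = e^μ X for a left "eigenmatrix". -/
lemma mul_exp_eigen {m : Type*} [Fintype m] [DecidableEq m]
    (M X : Matrix m m ℂ) (μ : ℂ) (h : X * M = μ • X) :
    X * NormedSpace.exp M = Complex.exp μ • X := by
  have hpow : ∀ n : ℕ, (LinearMap.mulLeft ℂ X) (M ^ n) = μ ^ n • X := by
    intro n
    induction n with
    | zero => simp
    | succ n ih =>
      simp only [LinearMap.mulLeft_apply] at ih ⊢
      rw [pow_succ, ← mul_assoc, ih, smul_mul_assoc, h, smul_smul, ← pow_succ]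
  exact exp_apply_eigen M (LinearMap.mulLeft ℂ X) μ X hpow

/-- expL on an eigenvector of L. -/
lemma expL_eigen {ι : Type*} [Fintype ι] [DecidableEq ι]
    (L : Matrix ι ι ℂ →ₗ[ℂ] Matrix ι ι ℂ) (σ : Matrix ι ι ℂ) (μ : ℂ)
    (h : L σ = μ • σ) : expL L σ = Complex.exp μ • σ := by
  set β := Matrix.stdBasis ℂ ι ι
  set M := LinearMap.toMatrix β β L with hM
  let f : Matrix (ι × ι) (ι × ι) ℂ →ₗ[ℂ] Matrix ι ι ℂ :=
    { toFun := fun A => Matrix.toLin β β A σ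
      map_add' := by intro A B; simp [map_add]
      map_smul' := by intro c A; simp [map_smul] }
  have hpow : ∀ n : ℕ, f (M ^ n) = μ ^ n • σ := by
    intro n
    induction n with
    | zero =>
      show Matrix.toLin β β (1 : Matrix (ι × ι) (ι × ι) ℂ) σ = _
      rw [Matrix.toLin_one]
      simp
    | succ n ih =>
      show Matrix.toLin β β (M ^ (n + 1)) σ = _
      rw [pow_succ', Matrix.toLin_mul β β β]
      have : Matrix.toLin β β (M ^ n) σ = μ ^ n • σ := ih
      simp only [LinearMap.comp_apply, this]
      rw [map_smul, hM, Matrix.toLin_toMatrix, h, smul_smul, ← pow_succ]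
  have := exp_apply_eigen M f μ σ hpow
  simpa [expL, f] using this

def P (b : Fin 4) : Matrix (Fin 2 × Fin 2) (Fin 2 × Fin 2) ℂ :=
  Matrix.vecMulVec (bell b) (bell b)

def sgn : Fin 4 → ℂ := ![1, 1, 1, -1]

lemma s2 : ((Real.sqrt 2 : ℂ))⁻¹ * ((Real.sqrt 2 : ℂ))⁻¹ = 2⁻¹ := by
  rw [← mul_inv]
  norm_cast
  rw [Real.mul_self_sqrt (by norm_num)]
  norm_num

@[simp] lemma star_bell (b : Fin 4) : star (bell b) = bell b := by
  funext p
  fin_cases b <;> simp [bell] <;> split_ifs <;>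
    simp [Complex.star_def, Complex.conj_ofReal]

lemma bell_dot (b c : Fin 4) : bell b ⬝ᵥ bell c = if b = c then 1 else 0 := by
  fin_cases b <;> fin_cases c <;>
    simp [bell, dotProduct, Fintype.sum_prod_type, Fin.sum_univ_two, Prod.ext_iff, s2] <;>
    ring_nf <;> simp [s2] <;> ring

lemma swap_bell (b : Fin 4) : swapM *ᵥ bell b = sgn b • bell b := by
  fin_cases b <;> funext p <;> obtain ⟨i, j⟩ := p <;> fin_cases i <;> fin_cases j <;>
    simp [swapM, sgn, bell, Matrix.mulVec, dotProduct, Fintype.sum_prod_type,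
      Fin.sum_univ_two, Prod.ext_iff]

lemma swapM_transpose : swapMᵀ = swapM := by
  ext p q
  simp [swapM, Matrix.transpose_apply, and_comm, eq_comm]

lemma bell_swap (b : Fin 4) : swapM.vecMul (bell b) = sgn b • bell b := by
  rw [← swapM_transpose, Matrix.vecMul_transpose, swap_bell]

lemma bell_complete : ∑ b : Fin 4, P b = 1 := by
  ext ⟨i, j⟩ ⟨k, l⟩
  fin_cases i <;> fin_cases j <;> fin_cases k <;> fin_cases l <;>
    simp [P, Fin.sum_univ_four, Matrix.vecMulVec_apply, bell, Matrix.one_apply,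
      Prod.ext_iff, s2] <;> ring_nf <;> simp [s2] <;> ring

lemma mul_vecMulVec {m : Type*} [Fintype m] (M : Matrix m m ℂ) (u v : m → ℂ) :
    M * Matrix.vecMulVec u v = Matrix.vecMulVec (M *ᵥ u) v := by
  ext p q
  simp [Matrix.mul_apply, Matrix.vecMulVec_apply, Matrix.mulVec, dotProduct,
    Finset.sum_mul, mul_assoc]

lemma vecMulVec_mul {m : Type*} [Fintype m] (M : Matrix m m ℂ) (u v : m → ℂ) :
    Matrix.vecMulVec u v * M = Matrix.vecMulVec u (M.vecMul v) := by
  ext p q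
  simp [Matrix.mul_apply, Matrix.vecMulVec_apply, Matrix.vecMul, dotProduct,
    Finset.mul_sum, mul_assoc]

lemma vecMulVec_mul_vecMulVec {m : Type*} [Fintype m] (u v w x : m → ℂ) :
    Matrix.vecMulVec u v * Matrix.vecMulVec w x = (v ⬝ᵥ w) • Matrix.vecMulVec u x := by
  ext p q
  simp only [Matrix.mul_apply, Matrix.vecMulVec_apply, Matrix.smul_apply, dotProduct,
    smul_eq_mul, Finset.sum_mul]
  exact Finset.sum_congr rfl fun r _ => by ring

lemma smul_vecMulVec {m : Type*} (c : ℂ) (u v : m → ℂ) :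
    Matrix.vecMulVec (c • u) v = c • Matrix.vecMulVec u v := by
  ext p q
  simp [Matrix.vecMulVec_apply, mul_assoc]

lemma vecMulVec_smul {m : Type*} (c : ℂ) (u v : m → ℂ) :
    Matrix.vecMulVec u (c • v) = c • Matrix.vecMulVec u v := by
  ext p q
  simp [Matrix.vecMulVec_apply]
  ring

lemma swapM_mul_P (b : Fin 4) : swapM * P b = sgn b • P b := by
  rw [P, mul_vecMulVec, swap_bell, smul_vecMulVec]

lemma P_mul_swapM (b : Fin 4) : P b * swapM = sgn b • P b := by
  rw [P, vecMulVec_mul, bell_swap, vecMulVec_smul]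

lemma P_mul_P (a b : Fin 4) : P a * P b = if a = b then P a else 0 := by
  rw [P, P, vecMulVec_mul_vecMulVec, bell_dot]
  split_ifs with h
  · subst h; simp [P]
  · simp

lemma bellDephasing_eq (ρ : Matrix (Fin 2 × Fin 2) (Fin 2 × Fin 2) ℂ) :
    bellDephasing ρ = ∑ b : Fin 4, P b * ρ * P b := by
  simp [bellDephasing, P, star_bell]

lemma bellDephasing_sigma (ρ : Matrix (Fin 2 × Fin 2) (Fin 2 × Fin 2) ℂ) (b c : Fin 4) :
    bellDephasing (P b * ρ * P c) = if b = c then P b * ρ * P c else 0 := by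
  rw [bellDephasing_eq]
  have hterm : ∀ a : Fin 4, P a * (P b * ρ * P c) * P a =
      if a = b ∧ c = a then P b * ρ * P c else 0 := by
    intro a
    rw [show P a * (P b * ρ * P c) * P a = (P a * P b) * ρ * (P c * P a) by
        simp only [mul_assoc], P_mul_P, P_mul_P]
    rcases eq_or_ne a b with hab | hab
    · rcases eq_or_ne c a with hca | hca
      · subst hab; subst hca
        simp
      · simp [hab, hca]
    · simp [hab]
  simp only [hterm]
  rcases eq_or_ne b c with hbc | hbc
  · subst hbc
    have hcond : ∀ a : Fin 4, (a = b ∧ b = a) ↔ a = b :=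
      fun a => ⟨fun h => h.1, fun h => ⟨h, h.symm⟩⟩
    simp [hcond]
  · have : ∀ a : Fin 4, ¬(a = b ∧ c = a) := by
      rintro a ⟨h1, h2⟩; exact hbc (h1 ▸ h2.symm ▸ rfl)
    simp [this, hbc]

end SwapDephasingAux

open SwapDephasingAux in
/-- for the SWAP–Bell-dephasing Lindbladian
`L(ρ) = i(Sρ − ρS) + λ(D_B(ρ) − ρ)`, the generated semigroup is
`e^{tL}(ρ) = e^{−λt} e^{itS} ρ e^{−itS} + (1 − e^{−λt}) D_B(ρ)`. -/
theorem swap_dephasing_semigroup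
    (lam : ℝ) (hlam : 0 ≤ lam)
    (L : Matrix (Fin 2 × Fin 2) (Fin 2 × Fin 2) ℂ →ₗ[ℂ]
          Matrix (Fin 2 × Fin 2) (Fin 2 × Fin 2) ℂ)
    (hL : ∀ ρ, L ρ = Complex.I • (swapM * ρ - ρ * swapM) +
        (lam : ℂ) • (bellDephasing ρ - ρ)) :
    ∀ t : ℝ, 0 ≤ t → ∀ ρ,
      expL ((t : ℂ) • L) ρ =
        ((Real.exp (-(lam * t)) : ℝ) : ℂ) •
            (NormedSpace.exp ((Complex.I * (t : ℂ)) • swapM) * ρ *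
              NormedSpace.exp ((-(Complex.I) * (t : ℂ)) • swapM)) +
          ((1 - Real.exp (-(lam * t)) : ℝ) : ℂ) • bellDephasing ρ := by
  intro t ht ρ
  -- key per-term claim
  have key : ∀ b c : Fin 4,
      expL ((t : ℂ) • L) (P b * ρ * P c) =
        ((Real.exp (-(lam * t)) : ℝ) : ℂ) •
            (NormedSpace.exp ((Complex.I * (t : ℂ)) • swapM) * (P b * ρ * P c) *
              NormedSpace.exp ((-(Complex.I) * (t : ℂ)) • swapM)) +
          ((1 - Real.exp (-(lam * t)) : ℝ) : ℂ) • bellDephasing (P b * ρ * P c) := by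
    intro b c
    set σ := P b * ρ * P c with hσ
    have h1 : swapM * σ = sgn b • σ := by
      rw [hσ, show swapM * (P b * ρ * P c) = (swapM * P b) * ρ * P c by
        simp only [mul_assoc], swapM_mul_P, smul_mul_assoc, smul_mul_assoc]
    have h2 : σ * swapM = sgn c • σ := by
      rw [hσ, show P b * ρ * P c * swapM = P b * ρ * (P c * swapM) by
        simp only [mul_assoc], P_mul_swapM, mul_smul_comm]
    have h3 : bellDephasing σ = if b = c then σ else 0 := bellDephasing_sigma ρ b c
    set μ : ℂ := (t : ℂ) * (Complex.I * (sgn b - sgn c) +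
        (lam : ℂ) * ((if b = c then (1 : ℂ) else 0) - 1)) with hμ
    have hLσ : ((t : ℂ) • L) σ = μ • σ := by
      rw [LinearMap.smul_apply, hL σ, h1, h2, h3, hμ]
      rcases eq_or_ne b c with h | h <;> simp [h] <;> match_scalars <;>
        simp only [Complex.coe_algebraMap] <;> ring
    have hexpσ := expL_eigen ((t : ℂ) • L) σ μ hLσ
    have hU : NormedSpace.exp ((Complex.I * (t : ℂ)) • swapM) * σ =
        Complex.exp (Complex.I * t * sgn b) • σ := by
      refine exp_mul_eigen _ _ _ ?_
      rw [smul_mul_assoc, h1, smul_smul]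
    have hU' : σ * NormedSpace.exp ((-(Complex.I) * (t : ℂ)) • swapM) =
        Complex.exp (-(Complex.I) * t * sgn c) • σ := by
      refine mul_exp_eigen _ _ _ ?_
      rw [mul_smul_comm, h2, smul_smul]
    have he : ((Real.exp (-(lam * t)) : ℝ) : ℂ) = Complex.exp ((-(lam * t) : ℝ) : ℂ) :=
      Complex.ofReal_exp _
    rw [hexpσ, hU, smul_mul_assoc, hU', h3, smul_smul, smul_smul]
    rcases eq_or_ne b c with h | h
    · subst h
      have hz : μ = 0 := by
        rw [hμ]; simp
      simp only [eq_self_iff_true, if_true]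
      rw [← add_smul]
      congr 1
      rw [hz, Complex.exp_zero, mul_assoc, ← Complex.exp_add,
        show Complex.I * ↑t * sgn b + -Complex.I * ↑t * sgn b = 0 by ring,
        Complex.exp_zero, mul_one]
      simp only [Complex.ofReal_sub, Complex.ofReal_one]
      ring
    · simp only [if_neg h, smul_zero, add_zero]
      congr 1
      rw [he, ← Complex.exp_add, ← Complex.exp_add, hμ]
      congr 1
      simp only [if_neg h]
      simp only [Complex.ofReal_neg, Complex.ofReal_mul]
      ring
  -- decomposition of ρ
  have hdecomp : ρ = ∑ b : Fin 4, ∑ c : Fin 4, P b * ρ * P c := by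
    have h1 : ρ = (∑ b : Fin 4, P b) * ρ * (∑ c : Fin 4, P c) := by
      rw [bell_complete, one_mul, mul_one]
    conv_lhs => rw [h1]
    simp only [Finset.sum_mul, Finset.mul_sum]
    exact Finset.sum_comm
  have hDsum : bellDephasing (∑ b : Fin 4, ∑ c : Fin 4, P b * ρ * P c) =
      ∑ b : Fin 4, ∑ c : Fin 4, bellDephasing (P b * ρ * P c) := by
    simp only [bellDephasing_eq, Finset.mul_sum, Finset.sum_mul]
    rw [Finset.sum_comm]
    refine Finset.sum_congr rfl fun b _ => Finset.sum_comm
  calc expL ((t : ℂ) • L) ρ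
      = ∑ b : Fin 4, ∑ c : Fin 4, expL ((t : ℂ) • L) (P b * ρ * P c) := by
        conv_lhs => rw [hdecomp]
        simp only [map_sum]
    _ = ∑ b : Fin 4, ∑ c : Fin 4,
        (((Real.exp (-(lam * t)) : ℝ) : ℂ) •
            (NormedSpace.exp ((Complex.I * (t : ℂ)) • swapM) * (P b * ρ * P c) *
              NormedSpace.exp ((-(Complex.I) * (t : ℂ)) • swapM)) +
          ((1 - Real.exp (-(lam * t)) : ℝ) : ℂ) • bellDephasing (P b * ρ * P c)) := by
        exact Finset.sum_congr rfl fun b _ => Finset.sum_congr rfl fun c _ => key b c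
    _ = _ := by
        conv_rhs => rw [hdecomp]
        rw [hDsum]
        simp only [Finset.mul_sum, Finset.sum_mul, Finset.smul_sum, Finset.sum_add_distrib]
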